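/- arXiv:math/0309049 — 2 statements merged into one kernel-verified Lean document; each statement's English description precedes it below -/
import Mathlib

section
/- Let a : Fin (n+1) → ℕ satisfy: for each odd i < n, a_i > a_{i−1} and a_i > a_{i+1}; and suppose the sequence b obtained from a by deleting consecutive repeated values (and the induced alternating subsequence) has a strict local maximum at position p. Then there exists an odd index j of a with a_j equal to b_p. (Each thick level of the underlying splitting comes from a thick level of the original.) -/
/-!
Take `x` in the fiber of `p` and `y` in the fiber of `p - 1`; monotonicity of `s` forces
`y < x`. If `x` is odd it is the required index. Otherwise `x - 1` is odd, so
`a (x - 1) > a x = b p`, while `s (x - 1)` is squeezed between `s y = p - 1` and `s x = p`.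
The value `p - 1` would give `a (x - 1) = b (p - 1) < b p`, so `s (x - 1) = p` and
`j = x - 1` works.
-/

lemma MonotoneOn.map_sub_one_eq_or_eq {s : ℕ → ℕ} {n x y : ℕ} (hs : MonotoneOn s (Set.Iic n))
    (hy : y ≤ n) (hx : x ≤ n) (hjump : s y + 1 = s x) :
    s (x - 1) = s y ∨ s (x - 1) = s x := by
  have hyx : y < x := hs.reflect_lt hy hx (by omega)
  have hlo : s y ≤ s (x - 1) := hs hy (show x - 1 ≤ n by omega) (by omega)
  have hhi : s (x - 1) ≤ s x := hs (show x - 1 ≤ n by omega) hx (by omega)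
  omega

lemma apply_lt_apply_sub_one_of_even {n : ℕ} {a : ℕ → ℕ}
    (hdesc : ∀ i : ℕ, Odd i → i < n → a (i + 1) < a i)
    {x : ℕ} (hx : Even x) (hx0 : 0 < x) (hxn : x ≤ n) : a x < a (x - 1) := by
  have h := hdesc (x - 1) (Nat.Even.sub_odd hx0 hx odd_one) (by omega)
  rwa [Nat.sub_add_cancel hx0] at h

theorem collapsed_local_max_from_odd_index_general (n m : ℕ) (a b s : ℕ → ℕ)
    (hsurj : ∀ q ≤ m, ∃ x ≤ n, s x = q)
    (hmono : ∀ x y : ℕ, x ≤ y → y ≤ n → s x ≤ s y)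
    (hconst : ∀ x ≤ n, b (s x) = a x)
    (halt : ∀ i : ℕ, Odd i → i < n → a (i - 1) < a i ∧ a (i + 1) < a i)
    (p : ℕ) (hp0 : 0 < p) (hpm : p < m)
    (hmaxl : b (p - 1) < b p) :
    ∃ j ≤ n, Odd j ∧ a j = b p := by
  have hs : MonotoneOn s (Set.Iic n) := fun x hx y hy hxy => hmono x y hxy hy
  obtain ⟨x, hxn, hxp⟩ := hsurj p hpm.le
  obtain ⟨y, hyn, hyp⟩ := hsurj (p - 1) (by omega)
  rcases Nat.even_or_odd x with hx | hx
  · have hyx : y < x := hs.reflect_lt hyn hxn (by omega)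
    have hpeak : a x < a (x - 1) :=
      apply_lt_apply_sub_one_of_even (fun i hi hin => (halt i hi hin).2) hx (by omega) hxn
    refine ⟨x - 1, by omega, Nat.Even.sub_odd (by omega) hx odd_one, ?_⟩
    rcases hs.map_sub_one_eq_or_eq hyn hxn (by omega) with h | h
    · have hrise : a (x - 1) < a x := by
        rw [← hconst _ (by omega), ← hconst x hxn, h, hyp, hxp]
        exact hmaxl
      omega
    · rw [← hconst _ (by omega), h, hxp]
  · exact ⟨x, hxn, hx, by rw [← hconst x hxn, hxp]⟩

/-- Abstract version of the "underlying HST splitting" lemma at the level of complexity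
sequences.  Let `a : {0,…,n} → ℕ` satisfy: for each odd `i < n`, `a_i > a_{i−1}` and
`a_i > a_{i+1}`.  Let `s : {0,…,n} → {0,…,m}` be a monotone surjective collapse map with
`a` constant on its fibers (so `b ∘ s = a`, where `b` is the collapsed sequence).  If `b`
has a strict local maximum at position `p`, then there exists an odd index `j` of `a`
with `a_j = b_p`: each thick level of the underlying splitting comes from a thick level
of the original. -/
theorem collapsed_local_max_from_odd_index (n m : ℕ) (a b s : ℕ → ℕ)
    (hle : ∀ x ≤ n, s x ≤ m)
    (hsurj : ∀ q ≤ m, ∃ x ≤ n, s x = q)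
    (hmono : ∀ x y : ℕ, x ≤ y → y ≤ n → s x ≤ s y)
    (hconst : ∀ x ≤ n, b (s x) = a x)
    (halt : ∀ i : ℕ, Odd i → i < n → a (i - 1) < a i ∧ a (i + 1) < a i)
    (p : ℕ) (hp0 : 0 < p) (hpm : p < m)
    (hmaxl : b (p - 1) < b p) (hmaxr : b (p + 1) < b p) :
    ∃ j ≤ n, Odd j ∧ a j = b p :=
  collapsed_local_max_from_odd_index_general n m a b s hsurj hmono hconst halt p hp0 hpm hmaxl
end

section
/- Suppose {F_i}_{i=0}^{n} is an HST splitting in which some thick level F_p (p odd, p < n) admits a weak reduction producing surfaces F_D, F_{DE}, F_E with c(F_D) < c(F_p), c(F_E) < c(F_p), and c(F_{DE}) < min(c(F_D), c(F_E)). Then each of the four replacement operations — (1) replace F_p by {F_D, F_{DE}, F_E}; (2) replace {F_{p−1}, F_p} by {F_{DE}, F_E}; (3) replace {F_p, F_{p+1}} by {F_D, F_{DE}}; (4) replace {F_{p−1}, F_p, F_{p+1}} by {F_{DE}} — produces a sequence whose multiset of odd-index values is strictly smaller in the lexicographic order on non-increasing enumerations. -/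
/-!
Compare the non-increasing enumerations from the top. While the largest value `a` of `t`
still occurs in `s + t.erase p`, both enumerations start with `a`, and one strips it off and
recurses. Once it no longer occurs, every entry of the new enumeration is smaller than `a`,
so the two lists already differ at the first position.
-/

def MultisetLexLT (s t : Multiset ℕ) : Prop :=
  List.Lex (· < ·) ((Multiset.sort s (· ≤ ·)).reverse) ((Multiset.sort t (· ≤ ·)).reverse)

namespace Multiset

variable {α : Type*} [LinearOrder α]

theorem reverse_sort_le_eq_sort_ge (s : Multiset α) : (s.sort (· ≤ ·)).reverse = s.sort (· ≥ ·) :=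
  List.Perm.eq_of_pairwise' (r := (· ≥ ·))
    (List.pairwise_reverse.2 (pairwise_sort s _)) (pairwise_sort s _)
    ((List.reverse_perm _).trans (by rw [← coe_eq_coe, sort_eq, sort_eq]))

theorem lex_sort_ge_add_erase (t : Multiset α) {p : α} (hp : p ∈ t) {s : Multiset α}
    (hs : ∀ x ∈ s, x < p) :
    List.Lex (· < ·) ((s + t.erase p).sort (· ≥ ·)) (t.sort (· ≥ ·)) := by
  induction t using strongInductionOn with
  | ih t ih =>
  obtain ⟨a, ha, hmax⟩ := t.toFinset.exists_max_image id ⟨p, mem_toFinset.2 hp⟩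
  simp only [mem_toFinset, id] at ha hmax
  have hsort_t : t.sort (· ≥ ·) = a :: (t.erase a).sort (· ≥ ·) := by
    conv_lhs => rw [← cons_erase ha]
    exact sort_cons _ _ _ fun x hx => hmax x (mem_of_mem_erase hx)
  rw [hsort_t]
  by_cases ha_survives : a ∈ t.erase p
  · have hp' : p ∈ t.erase a := by
      rcases eq_or_ne p a with rfl | hpa
      · exact ha_survives
      · exact (mem_erase_of_ne hpa).2 hp
    have hsplit : s + t.erase p = a ::ₘ (s + (t.erase a).erase p) := by
      rw [erase_comm, ← add_cons, cons_erase ha_survives]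
    rw [hsplit, sort_cons]
    · exact .cons (ih _ (erase_lt.2 ha) hp')
    · intro x hx
      rcases mem_add.1 hx with hx | hx
      · exact (hs x hx).le.trans (hmax p hp)
      · exact hmax x (mem_of_mem_erase (mem_of_mem_erase hx))
  · have hlt : ∀ x ∈ s + t.erase p, x < a := by
      intro x hx
      rcases mem_add.1 hx with hx | hx
      · exact (hs x hx).trans_le (hmax p hp)
      · exact (hmax x (mem_of_mem_erase hx)).lt_of_ne (by rintro rfl; exact ha_survives hx)
    cases h : (s + t.erase p).sort (· ≥ ·) with
    | nil => exact .nil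
    | cons x _ => exact .rel (hlt x (by rw [← mem_sort (· ≥ ·), h]; exact List.mem_cons_self))

end Multiset

open Multiset in
theorem multisetLexLT_add_erase {s t : Multiset ℕ} {p : ℕ} (hp : p ∈ t) (hs : ∀ x ∈ s, x < p) :
    MultisetLexLT (s + t.erase p) t := by
  rw [MultisetLexLT, reverse_sort_le_eq_sort_ge, reverse_sort_le_eq_sort_ge]
  exact lex_sort_ge_add_erase t hp hs

theorem reduction_moves_decrease_general (S : Multiset ℕ) (p d de e : ℕ) (hp : p ∈ S)
    (hd : d < p) (he : e < p) (hded : de < d) :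
    MultisetLexLT (d ::ₘ de ::ₘ e ::ₘ S.erase p) S ∧
    MultisetLexLT (de ::ₘ e ::ₘ S.erase p) S ∧
    MultisetLexLT (d ::ₘ de ::ₘ S.erase p) S ∧
    MultisetLexLT (de ::ₘ S.erase p) S := by
  have hde : de < p := hded.trans hd
  have replace (s : Multiset ℕ) (hs : ∀ x ∈ s, x < p) := multisetLexLT_add_erase hp hs
  refine ⟨?_, ?_, ?_, ?_⟩
  · simpa using replace {d, de, e} (by simp [hd, hde, he])
  · simpa using replace {de, e} (by simp [hde, he])
  · simpa using replace {d, de} (by simp [hd, hde])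
  · simpa using replace {de} (by simp [hde])

/-- Abstract form of the Scharlemann–Thompson reduction: a weak reduction of a thick
level of complexity `p` produces complexities `d = c(F_D) < p`, `e = c(F_E) < p` and
`de = c(F_{DE}) < min(d, e)`.  Each of the four replacement operations — (1) replace `p`
by `{d, de, e}`; (2) replace `p` (together with the adjacent thin level) by `{de, e}`;
(3) by `{d, de}`; (4) by `{de}` — produces a multiset of thick-level complexities which
is strictly smaller in the lexicographic order on non-increasing enumerations. -/
theorem reduction_moves_decrease (S : Multiset ℕ) (p d de e : ℕ) (hp : p ∈ S)
    (hd : d < p) (he : e < p) (hded : de < d) (hdee : de < e) :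
    MultisetLexLT (d ::ₘ de ::ₘ e ::ₘ S.erase p) S ∧
    MultisetLexLT (de ::ₘ e ::ₘ S.erase p) S ∧
    MultisetLexLT (d ::ₘ de ::ₘ S.erase p) S ∧
    MultisetLexLT (de ::ₘ S.erase p) S :=
  reduction_moves_decrease_general S p d de e hp hd he hded
end
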